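/- Let n ≥ 2, l a positive integer, r a prime with gcd(l, r) = 1, and m ≥ 0. Then Σ_{d | l} π_n(r^{m+1} l / d) = n^{r^{m+1} l} − n^{r^m l}, where π_n(k) counts primitive words of length k over an alphabet of size n. -/

import Mathlib

variable {A : Type*}

/-- k-fold concatenation of a word with itself. -/
def pw (w : List A) : ℕ → List A
  | 0 => []
  | n + 1 => w ++ pw w n

/-- A nonempty word is primitive if it is not a proper power. -/
def Primitive (w : List A) : Prop :=
  w ≠ [] ∧ ∀ (v : List A) (m : ℕ), w = pw v m → m = 1

/-- Number of primitive words of length k over an n-letter alphabet. -/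
noncomputable def piw (n k : ℕ) : ℕ :=
  Nat.card {w : List (Fin n) // w.length = k ∧ Primitive w}

/-!
Every nonempty word is a power `u ^ e` of a unique primitive word `u`, its primitive root;
uniqueness comes from the fact that words with a common power commute, and commuting words
are powers of a common word. Sorting the words of length `k` by the length of their root
gives `∑_{d ∣ k} π_n(d) = n ^ k`. The divisors of `r ^ (m + 1) * l` that do not divide
`r ^ m * l` are exactly the `r ^ (m + 1) * d` with `d ∣ l`, so the sum in question
(reindexed by `d ↦ l / d`) is the difference of the divisor sums for `r ^ (m + 1) * l` and `r ^ m * l`.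
-/

theorem length_pw (w : List A) (n : ℕ) : (pw w n).length = n * w.length := by
  induction n with
  | zero => simp [pw]
  | succ k ih => simp [pw, ih, Nat.succ_mul, Nat.add_comm]

theorem pw_one (w : List A) : pw w 1 = w := by simp [pw]

theorem pw_add (w : List A) (a b : ℕ) : pw w (a + b) = pw w a ++ pw w b := by
  induction a with
  | zero => simp [pw]
  | succ k ih => rw [Nat.succ_add, pw, pw, ih, List.append_assoc]

theorem append_pw_eq_pw_append (x y : List A) (b : ℕ) :
    x ++ pw (y ++ x) b = pw (x ++ y) b ++ x := by
  induction b with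
  | zero => simp [pw]
  | succ k ih => simp only [pw, List.append_assoc, ih]

theorem append_pw_comm (w : List A) (n : ℕ) : w ++ pw w n = pw w n ++ w := by
  simpa using append_pw_eq_pw_append w [] n

theorem pw_mul (w : List A) (a b : ℕ) : pw w (a * b) = pw (pw w a) b := by
  induction b with
  | zero => simp [pw]
  | succ k ih => rw [Nat.mul_succ, pw_add, pw, ih, append_pw_comm]

theorem pw_left_injective {k : ℕ} (hk : k ≠ 0) : Function.Injective (fun w : List A => pw w k) := by
  intro x y h
  have hlen : x.length = y.length := by
    simpa [length_pw, hk] using congrArg List.length h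
  obtain ⟨k, rfl⟩ := Nat.exists_eq_succ_of_ne_zero hk
  exact List.append_inj_left h hlen

theorem exists_pw_of_append_comm {x y : List A} (h : x ++ y = y ++ x) :
    ∃ t i j, x = pw t i ∧ y = pw t j := by
  induction hN : x.length + y.length using Nat.strong_induction_on generalizing x y with
  | _ N ih =>
  wlog hxy : x.length ≤ y.length generalizing x y
  · obtain ⟨t, i, j, hy, hx⟩ := this h.symm (by omega) (by omega)
    exact ⟨t, j, i, hx, hy⟩
  obtain ⟨z, rfl⟩ : x <+: y :=
    List.prefix_of_prefix_length_le (h ▸ List.prefix_append x y) (List.prefix_append y x) hxy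
  rcases eq_or_ne x [] with rfl | hx
  · exact ⟨z, 0, 1, rfl, (pw_one z).symm⟩
  have hxz : x ++ z = z ++ x := by simpa using h
  have hlt : x.length + z.length < N := by
    have := List.length_pos_iff.mpr hx
    simp only [List.length_append] at hN
    omega
  obtain ⟨t, i, j, rfl, rfl⟩ := ih _ hlt hxz rfl
  exact ⟨t, i, i + j, rfl, (pw_add t i j).symm⟩

theorem append_comm_of_pw_eq_pw {u v : List A} {a b : ℕ} (ha : a ≠ 0) (hb : b ≠ 0)
    (h : pw u a = pw v b) : u ++ v = v ++ u := by
  wlog huv : u.length ≤ v.length generalizing u v a b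
  · exact (this hb ha h.symm (by omega)).symm
  have prefix_pw {w : List A} {k : ℕ} (hk : k ≠ 0) : w <+: pw w k := by
    obtain ⟨k, rfl⟩ := Nat.exists_eq_succ_of_ne_zero hk
    exact List.prefix_append w _
  obtain ⟨z, rfl⟩ : u <+: v :=
    List.prefix_of_prefix_length_le (h ▸ prefix_pw ha) (prefix_pw hb) huv
  -- conjugating `(u ++ z) ^ b = u ^ a` by `u` shows that `z ++ u` has the same `b`-th power
  have hpow : pw (z ++ u) b = pw (u ++ z) b := by
    apply List.append_cancel_left (as := u)
    rw [append_pw_eq_pw_append, ← h, ← append_pw_comm, h]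
  have hzu : z ++ u = u ++ z := pw_left_injective hb hpow
  simp only [List.append_assoc, hzu]

theorem Primitive.eq_of_pw_eq {u v : List A} {a b : ℕ} (hu : Primitive u) (hv : Primitive v)
    (ha : a ≠ 0) (hb : b ≠ 0) (h : pw u a = pw v b) : u = v := by
  obtain ⟨t, i, j, rfl, rfl⟩ := exists_pw_of_append_comm (append_comm_of_pw_eq_pw ha hb h)
  rw [hu.2 t i rfl, hv.2 t j rfl]

theorem exists_primitive_pw {w : List A} (hw : w ≠ []) :
    ∃ u e, Primitive u ∧ e ≠ 0 ∧ w = pw u e := by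
  induction hN : w.length using Nat.strong_induction_on generalizing w with
  | _ N ih =>
  by_cases hp : Primitive w
  · exact ⟨w, 1, hp, one_ne_zero, (pw_one w).symm⟩
  obtain ⟨v, m, rfl, hm⟩ : ∃ v m, w = pw v m ∧ m ≠ 1 := by
    simpa [Primitive, hw] using hp
  have hlen : 0 < m * v.length := by
    rw [← length_pw]
    exact List.length_pos_iff.mpr hw
  have hv0 : 0 < v.length := Nat.pos_of_mul_pos_left hlen
  have hm0 : m ≠ 0 := by rintro rfl; simp at hlen
  have hv : v.length < N := by
    rw [← hN, length_pw]
    nlinarith [show 2 ≤ m by omega]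
  obtain ⟨u, e, hu, he, rfl⟩ := ih _ hv (List.length_pos_iff.mp hv0) rfl
  exact ⟨u, e * m, hu, mul_ne_zero he hm0, (pw_mul u e m).symm⟩

instance (n d : ℕ) : Finite {w : List (Fin n) // w.length = d ∧ Primitive w} :=
  Finite.of_injective (β := List.Vector (Fin n) d) (fun w => ⟨w.1, w.2.1⟩)
    fun _ _ h => Subtype.ext (congrArg List.Vector.toList h)

/-- The map `(d, u) ↦ u ^ (k / d)`. -/
noncomputable def sigmaPrimitiveEquiv (n : ℕ) {k : ℕ} (hk : k ≠ 0) :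
    (Σ d : k.divisors, {u : List (Fin n) // u.length = d ∧ Primitive u}) ≃
      List.Vector (Fin n) k := by
  refine Equiv.ofBijective (fun p => ⟨pw p.2.1 (k / p.1), ?_⟩) ⟨?_, ?_⟩
  · rw [length_pw, p.2.2.1, Nat.div_mul_cancel (Nat.dvd_of_mem_divisors p.1.2)]
  · rintro ⟨⟨d, hd⟩, u, hud, hu⟩ ⟨⟨d', hd'⟩, u', hud', hu'⟩ h
    have hquot {d : ℕ} (hd : d ∈ k.divisors) : k / d ≠ 0 :=
      (Nat.div_pos (Nat.divisor_le hd) (Nat.pos_of_mem_divisors hd)).ne'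
    obtain rfl := hu.eq_of_pw_eq hu' (hquot hd) (hquot hd') (congrArg Subtype.val h)
    obtain rfl : d = d' := hud.symm.trans hud'
    rfl
  · rintro ⟨w, rfl⟩
    have hw : w ≠ [] := by rintro rfl; exact hk rfl
    obtain ⟨u, e, hu, he, rfl⟩ := exists_primitive_pw hw
    have hk' : (pw u e).length = e * u.length := length_pw u e
    refine ⟨⟨⟨u.length, Nat.mem_divisors.mpr ⟨Dvd.intro_left e hk'.symm, hk⟩⟩, u, rfl, hu⟩, ?_⟩
    have hu0 : 0 < u.length := List.length_pos_iff.mpr hu.1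
    refine Subtype.ext (?_ : pw u ((pw u e).length / u.length) = pw u e)
    rw [hk', Nat.mul_div_cancel _ hu0]

theorem sum_divisors_piw (n : ℕ) {k : ℕ} (hk : k ≠ 0) : ∑ d ∈ k.divisors, piw n d = n ^ k := by
  calc ∑ d ∈ k.divisors, piw n d
      = Nat.card (Σ d : k.divisors, {u : List (Fin n) // u.length = d ∧ Primitive u}) := by
        rw [Nat.card_sigma, ← Finset.sum_coe_sort]
        rfl
    _ = n ^ k := by rw [Nat.card_congr (sigmaPrimitiveEquiv n hk)]; simp

theorem Nat.divisors_pow_succ_mul_sdiff {p l : ℕ} (hp : p.Prime) (hpl : ¬ p ∣ l) (m : ℕ) :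
    (p ^ (m + 1) * l).divisors \ (p ^ m * l).divisors =
      l.divisors.map ⟨(p ^ (m + 1) * ·), mul_right_injective₀ (pow_ne_zero _ hp.ne_zero)⟩ := by
  rcases eq_or_ne l 0 with rfl | hl
  · simp
  ext e
  simp only [Finset.mem_sdiff, Nat.mem_divisors, Finset.mem_map, Function.Embedding.coeFn_mk]
  constructor
  · rintro ⟨⟨he, -⟩, hne⟩
    obtain ⟨q, d, hq, hd, rfl⟩ := Nat.dvd_mul.mp he
    obtain ⟨i, hi, rfl⟩ := (Nat.dvd_prime_pow hp).mp hq
    obtain rfl : i = m + 1 := by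
      by_contra hi'
      exact hne ⟨mul_dvd_mul (pow_dvd_pow p (by omega)) hd, by simp [hp.ne_zero, hl]⟩
    exact ⟨d, ⟨hd, hl⟩, rfl⟩
  · rintro ⟨d, ⟨hd, -⟩, rfl⟩
    refine ⟨⟨mul_dvd_mul_left _ hd, by simp [hp.ne_zero, hl]⟩, fun ⟨h, _⟩ => hpl ?_⟩
    rw [pow_succ, mul_assoc, Nat.mul_dvd_mul_iff_left (pow_pos hp.pos m)] at h
    exact dvd_of_mul_right_dvd h

theorem sum_piw_eq_general (n l r m : ℕ) (hl : 0 < l) (hr : r.Prime)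
    (hgcd : Nat.gcd l r = 1) :
    (∑ d ∈ l.divisors, (piw n (r ^ (m + 1) * l / d) : ℤ)) =
      (n : ℤ) ^ (r ^ (m + 1) * l) - (n : ℤ) ^ (r ^ m * l) := by
  have hr0 := hr.pos
  have hrl : ¬ r ∣ l := fun h => hr.one_lt.ne' (Nat.eq_one_of_dvd_coprimes hgcd h dvd_rfl)
  have sum_divisors (k : ℕ) (hk : 0 < k) : ∑ d ∈ k.divisors, (piw n d : ℤ) = (n : ℤ) ^ k := by
    exact_mod_cast sum_divisors_piw n hk.ne'
  have hsub : (r ^ m * l).divisors ⊆ (r ^ (m + 1) * l).divisors :=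
    Nat.divisors_subset_of_dvd (by positivity) (mul_dvd_mul_right (pow_dvd_pow r m.le_succ) l)
  calc (∑ d ∈ l.divisors, (piw n (r ^ (m + 1) * l / d) : ℤ))
      = ∑ d ∈ l.divisors, (piw n (r ^ (m + 1) * d) : ℤ) := by
        rw [← Nat.sum_div_divisors l fun d => (piw n (r ^ (m + 1) * d) : ℤ)]
        refine Finset.sum_congr rfl fun d hd => ?_
        rw [Nat.mul_div_assoc _ (Nat.dvd_of_mem_divisors hd)]
    _ = ∑ e ∈ (r ^ (m + 1) * l).divisors \ (r ^ m * l).divisors, (piw n e : ℤ) := by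
        rw [Nat.divisors_pow_succ_mul_sdiff hr hrl, Finset.sum_map]
        rfl
    _ = _ := by rw [Finset.sum_sdiff_eq_sub hsub, sum_divisors _ (by positivity),
          sum_divisors _ (by positivity)]

theorem sum_piw_eq (n l r m : ℕ) (hn : 2 ≤ n) (hl : 0 < l) (hr : r.Prime)
    (hgcd : Nat.gcd l r = 1) :
    (∑ d ∈ l.divisors, (piw n (r ^ (m + 1) * l / d) : ℤ)) =
      (n : ℤ) ^ (r ^ (m + 1) * l) - (n : ℤ) ^ (r ^ m * l) :=
  sum_piw_eq_general n l r m hl hr hgcd
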